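/- arXiv:1802.01755 — 5 statements merged into one kernel-verified Lean document; each statement's English description precedes it below -/
import Mathlib

section
/- Let T ≥ 2, let f = (f_1, …, f_T) be a real vector with f_T ≠ 0 and f_t ≠ 0 for all t, and let σ_1², …, σ_T² > 0. Define φ_t = Σ_{τ=t}^{T} (f_τ/σ_τ)² for t = 1, …, T. Define the (T−1)×T matrix Π = (π_{ts}) by π_{tt} = (√(φ_{t+1}/φ_t))/σ_t, π_{ts} = −f_t f_s (√(φ_{t+1}/φ_t)) / (φ_{t+1} σ_t σ_s²) for s > t, and π_{ts} = 0 for s < t. Then Π f = 0 and Π Σ_σ Π' = I_{T−1}, where Σ_σ = diag(σ_1², …, σ_T²). -/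
/-! Write `g s = f s / σ s`. Then `Π = W * diag(σ)⁻¹`, where `W` is the generalized Helmert matrix
of `g` with unit variances, so `Π f = W g` and `Π Σ_σ Πᵀ = W Wᵀ`. Row `t` of `W` is
`c_t (e_t - (g_t / φ_{t+1}) g 1_{s > t})` with `c_t = √(φ_{t+1} / φ_t)`. It is orthogonal to `g`
because `∑_{s > t} g_s² = φ_{t+1}`, and it is a unit vector because
`c_t² (1 + g_t² / φ_{t+1}) = c_t² φ_t / φ_{t+1} = 1`. For `t < u`, row `u` is supported on `s ≥ u`,
where row `t` is a multiple of `g`, so the rows are orthogonal since row `u` is orthogonal to `g`. -/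

open Finset Matrix

namespace Helmert

noncomputable section

variable (T : ℕ) (g : ℕ → ℝ)

def tail (t : ℕ) : ℝ := ∑ s ∈ Ico t T, g s ^ 2

def scale (t : ℕ) : ℝ := √(tail T g (t + 1) / tail T g t)

def row (t s : ℕ) : ℝ :=
  if s < t then 0 else if s = t then scale T g t else -(scale T g t * g t / tail T g (t + 1)) * g s

def matrix : Matrix (Fin (T - 1)) (Fin T) ℝ := Matrix.of fun t s => row T g t s

end

variable {T g}

theorem tail_eq_sq_add {t : ℕ} (ht : t < T) : tail T g t = g t ^ 2 + tail T g (t + 1) :=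
  sum_eq_sum_Ico_succ_bot ht _

theorem tail_pos (hg : g (T - 1) ≠ 0) {t : ℕ} (ht : t < T) : 0 < tail T g t :=
  sum_pos' (fun _ _ => sq_nonneg _) ⟨T - 1, mem_Ico.mpr ⟨by omega, by omega⟩, by positivity⟩

theorem sum_Ico_succ_row_mul (h : ℕ → ℝ) (t : ℕ) :
    ∑ s ∈ Ico (t + 1) T, row T g t s * h s =
      -(scale T g t * g t / tail T g (t + 1)) * ∑ s ∈ Ico (t + 1) T, g s * h s := by
  rw [mul_sum]
  refine sum_congr rfl fun s hs => ?_
  have hts : t < s := (mem_Ico.mp hs).1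
  simp [row, hts.not_gt, hts.ne', mul_assoc]

theorem sum_Ico_row_mul (h : ℕ → ℝ) {a t : ℕ} (hat : a ≤ t) (ht : t < T) :
    ∑ s ∈ Ico a T, row T g t s * h s =
      scale T g t * h t - scale T g t * g t / tail T g (t + 1) * ∑ s ∈ Ico (t + 1) T, g s * h s := by
  have head : ∑ s ∈ Ico a t, row T g t s * h s = 0 :=
    sum_eq_zero fun s hs => by simp [row, (mem_Ico.mp hs).2]
  rw [← sum_Ico_consecutive _ hat ht.le, sum_eq_sum_Ico_succ_bot ht, head,
    sum_Ico_succ_row_mul]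
  simp only [row, lt_irrefl, if_false, if_true]
  ring

theorem sum_row_mul_eq_zero (hg : g (T - 1) ≠ 0) {a t : ℕ} (hat : a ≤ t) (ht : t + 1 < T) :
    ∑ s ∈ Ico a T, row T g t s * g s = 0 := by
  have hpos := tail_pos hg ht
  rw [sum_Ico_row_mul g hat (by omega)]
  simp only [← sq]
  rw [← tail]
  field_simp
  ring

theorem sum_row_mul_row_self (hg : g (T - 1) ≠ 0) {t : ℕ} (ht : t + 1 < T) :
    ∑ s ∈ range T, row T g t s * row T g t s = 1 := by
  have hpos := tail_pos hg ht
  have hpos' := tail_pos hg (t := t) (by omega)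
  have hscale : scale T g t ^ 2 = tail T g (t + 1) / tail T g t :=
    Real.sq_sqrt (div_pos hpos hpos').le
  have hrest : ∑ s ∈ Ico (t + 1) T, g s * row T g t s =
      -(scale T g t * g t / tail T g (t + 1)) * tail T g (t + 1) := by
    simp_rw [mul_comm (g _), sum_Ico_succ_row_mul, ← sq, tail]
  rw [range_eq_Ico, sum_Ico_row_mul _ (Nat.zero_le t) (by omega), hrest]
  simp only [row, lt_irrefl, if_false, if_true]
  rw [tail_eq_sq_add (t := t) (by omega)] at hscale
  calc _ = scale T g t ^ 2 * ((g t ^ 2 + tail T g (t + 1)) / tail T g (t + 1)) := by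
        field_simp; ring
    _ = 1 := by rw [hscale]; field_simp

theorem sum_row_mul_row_of_lt (hg : g (T - 1) ≠ 0) {t u : ℕ} (htu : t < u) (hu : u + 1 < T) :
    ∑ s ∈ range T, row T g t s * row T g u s = 0 := by
  rw [range_eq_Ico, sum_Ico_row_mul _ (Nat.zero_le t) (by omega)]
  simp_rw [mul_comm (g _)]
  rw [sum_row_mul_eq_zero hg htu hu]
  simp [row, htu]

theorem matrix_mulVec_eq_zero (hg : g (T - 1) ≠ 0) :
    matrix T g *ᵥ (fun s : Fin T => g s) = 0 := by
  funext t
  have ht : (t : ℕ) + 1 < T := by omega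
  change ∑ s : Fin T, row T g t s * g s = 0
  rw [Fin.sum_univ_eq_sum_range (fun s => row T g t s * g s), range_eq_Ico]
  exact sum_row_mul_eq_zero hg (Nat.zero_le _) ht

theorem matrix_mul_transpose_eq_one (hg : g (T - 1) ≠ 0) :
    matrix T g * (matrix T g)ᵀ = 1 := by
  ext t u
  have entry : (matrix T g * (matrix T g)ᵀ) t u = ∑ s ∈ range T, row T g t s * row T g u s := by
    simp [mul_apply, matrix, Fin.sum_univ_eq_sum_range (fun s => row T g t s * row T g u s)]
  rw [entry, one_apply]
  rcases lt_trichotomy (t : ℕ) u with htu | htu | htu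
  · rw [sum_row_mul_row_of_lt hg htu (by omega), if_neg (Fin.ne_of_lt htu)]
  · rw [Fin.ext htu, sum_row_mul_row_self hg (by omega), if_pos rfl]
  · simp_rw [mul_comm (row T g t _)]
    rw [sum_row_mul_row_of_lt hg htu (by omega), if_neg (Fin.ne_of_gt htu)]

end Helmert

theorem Matrix.mul_diagonal_inv_mul_diagonal_sq_mul_transpose {m n K : Type*} [Fintype n]
    [DecidableEq n] [Field K] (W : Matrix m n K) {d : n → K} (hd : ∀ i, d i ≠ 0) :
    W * diagonal (fun i => (d i)⁻¹) * diagonal (fun i => d i ^ 2) *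
      (W * diagonal (fun i => (d i)⁻¹))ᵀ = W * Wᵀ := by
  have hunit : diagonal (fun i => (d i)⁻¹) * diagonal (fun i => d i ^ 2) *
      diagonal (fun i => (d i)⁻¹) = 1 := by
    rw [diagonal_mul_diagonal, diagonal_mul_diagonal, ← diagonal_one]
    congr 1
    funext i
    field_simp [hd i]
  rw [transpose_mul, diagonal_transpose]
  calc _ = W * (diagonal (fun i => (d i)⁻¹) * diagonal (fun i => d i ^ 2) *
        diagonal (fun i => (d i)⁻¹)) * Wᵀ := by simp only [Matrix.mul_assoc]
    _ = W * Wᵀ := by rw [hunit, Matrix.mul_one]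

/-- Generalized Helmert transformation (Kuersteiner–Prucha, Proposition B.1).
Indices are 0-based: rows `t = 0, …, T-2` correspond to the paper's `t = 1, …, T-1`. -/
theorem generalized_helmert
    (T : ℕ) (hT : 2 ≤ T) (f σ : ℕ → ℝ)
    (hf : ∀ t, t < T → f t ≠ 0) (hσ : ∀ t, t < T → 0 < σ t)
    (φ : ℕ → ℝ) (hφ : ∀ t, φ t = ∑ τ ∈ Finset.Ico t T, (f τ / σ τ) ^ 2)
    (Pmat : Matrix (Fin (T - 1)) (Fin T) ℝ)
    (hPmat : ∀ (t : Fin (T - 1)) (s : Fin T),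
      Pmat t s =
        if (s : ℕ) < (t : ℕ) then 0
        else if (s : ℕ) = (t : ℕ) then Real.sqrt (φ ((t : ℕ) + 1) / φ (t : ℕ)) / σ (t : ℕ)
        else -(f (t : ℕ)) * f (s : ℕ) * Real.sqrt (φ ((t : ℕ) + 1) / φ (t : ℕ)) /
          (φ ((t : ℕ) + 1) * σ (t : ℕ) * (σ (s : ℕ)) ^ 2)) :
    Pmat.mulVec (fun s : Fin T => f (s : ℕ)) = 0 ∧
      Pmat * Matrix.diagonal (fun s : Fin T => (σ (s : ℕ)) ^ 2) * Pmat.transpose = 1 := by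
  set g : ℕ → ℝ := fun τ => f τ / σ τ
  obtain rfl : φ = Helmert.tail T g := funext hφ
  have hg : g (T - 1) ≠ 0 := div_ne_zero (hf _ (by omega)) (hσ _ (by omega)).ne'
  have hPmat : Pmat = Helmert.matrix T g * diagonal fun s : Fin T => (σ s)⁻¹ := by
    ext t s
    rw [hPmat, mul_diagonal]
    simp only [Helmert.matrix, Helmert.row, Helmert.scale, of_apply, g]
    split_ifs with _ heq
    · simp
    · rw [heq]; ring
    · ring
  subst hPmat
  constructor
  · have hscaled : (diagonal fun s : Fin T => (σ s)⁻¹) *ᵥ (fun s : Fin T => f s) =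
        fun s : Fin T => g s :=
      funext fun s => by simp [mulVec_diagonal, g, div_eq_inv_mul]
    rw [← mulVec_mulVec, hscaled, Helmert.matrix_mulVec_eq_zero hg]
  · rw [mul_diagonal_inv_mul_diagonal_sq_mul_transpose _ fun s : Fin T => (hσ s s.isLt).ne',
      Helmert.matrix_mul_transpose_eq_one hg]
end

section
/- Let T ≥ 2, let f ∈ ℝ^T with f_t ≠ 0 for all t, and let Σ_σ = diag(σ_1², …, σ_T²) with σ_t² > 0. Let F be the (T−1)×T matrix with F_{tt} = 1, F_{t,t+1} = −f_t/f_{t+1}, and all other entries zero. Then F f = 0, and F Σ_σ F' is symmetric positive definite; moreover, if U is any invertible upper triangular (T−1)×(T−1) matrix with F Σ_σ F' = U U', then Π := U^{−1} F satisfies Π f = 0 and Π Σ_σ Π' = I_{T−1}, and Π is upper triangular in the sense that π_{ts} = 0 for s < t. -/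
open Matrix

private lemma sum_eq_add_of_two {ι M : Type*} [Fintype ι] [DecidableEq ι] [AddCommMonoid M]
    (g : ι → M) (a b : ι) (hab : a ≠ b) (h : ∀ c, c ≠ a → c ≠ b → g c = 0) :
    ∑ c, g c = g a + g b := by
  rw [← Finset.sum_subset (Finset.subset_univ {a, b})
    (fun x _ hx => by
      simp only [Finset.mem_insert, Finset.mem_singleton, not_or] at hx
      exact h x hx.1 hx.2)]
  exact Finset.sum_pair hab

/-- Quasi-differencing matrix `F` removes the factor `f`, `F Σ_σ Fᵀ` is positive definite,
and for any invertible upper-triangular `U` with `F Σ_σ Fᵀ = U Uᵀ`, the matrix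
`Pmat = U⁻¹ F` satisfies `Pmat f = 0`, `Pmat Σ_σ Pmatᵀ = I`, and is upper triangular.
Indices are 0-based. -/
theorem quasi_differencing_factorization
    (T : ℕ) (hT : 2 ≤ T) (f : Fin T → ℝ) (hf : ∀ t, f t ≠ 0)
    (σ2 : Fin T → ℝ) (hσ2 : ∀ t, 0 < σ2 t)
    (F : Matrix (Fin (T - 1)) (Fin T) ℝ)
    (hF : ∀ (t : Fin (T - 1)) (s : Fin T),
      F t s =
        if (s : ℕ) = (t : ℕ) then 1
        else if (s : ℕ) = (t : ℕ) + 1 then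
          -(f ⟨(t : ℕ), by omega⟩ / f s)
        else 0) :
    F.mulVec f = 0 ∧
    (F * Matrix.diagonal σ2 * F.transpose).PosDef ∧
    ∀ U : Matrix (Fin (T - 1)) (Fin (T - 1)) ℝ, IsUnit U.det →
      (∀ i j : Fin (T - 1), (j : ℕ) < (i : ℕ) → U i j = 0) →
      F * Matrix.diagonal σ2 * F.transpose = U * U.transpose →
      (U⁻¹ * F).mulVec f = 0 ∧
      (U⁻¹ * F) * Matrix.diagonal σ2 * (U⁻¹ * F).transpose = 1 ∧
      (∀ (t : Fin (T - 1)) (s : Fin T), (s : ℕ) < (t : ℕ) → (U⁻¹ * F) t s = 0) := by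
  -- Part 1 : F f = 0
  have hFf : F.mulVec f = 0 := by
    funext t
    have ht : (t : ℕ) < T - 1 := t.isLt
    have ha : (t : ℕ) < T := by omega
    have hb : (t : ℕ) + 1 < T := by omega
    have hsum : (F.mulVec f) t =
        F t ⟨(t : ℕ), ha⟩ * f ⟨(t : ℕ), ha⟩ +
          F t ⟨(t : ℕ) + 1, hb⟩ * f ⟨(t : ℕ) + 1, hb⟩ := by
      rw [Matrix.mulVec, dotProduct]
      refine sum_eq_add_of_two _ _ _ (by simp) ?_
      intro c hc1 hc2
      have h1 : (c : ℕ) ≠ (t : ℕ) := fun h => hc1 (Fin.ext h)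
      have h2 : (c : ℕ) ≠ (t : ℕ) + 1 := fun h => hc2 (Fin.ext h)
      rw [hF, if_neg h1, if_neg h2, zero_mul]
    have e1 : F t ⟨(t : ℕ), ha⟩ = 1 := by
      rw [hF]; exact if_pos rfl
    have e2 : F t ⟨(t : ℕ) + 1, hb⟩ =
        -(f ⟨(t : ℕ), by omega⟩ / f ⟨(t : ℕ) + 1, hb⟩) := by
      rw [hF]
      rw [if_neg (show ¬(((⟨(t : ℕ) + 1, hb⟩ : Fin T) : ℕ) = (t : ℕ)) from
        Nat.succ_ne_self _)]
      rw [if_pos (show ((⟨(t : ℕ) + 1, hb⟩ : Fin T) : ℕ) = (t : ℕ) + 1 from rfl)]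
    rw [hsum, e1, e2]
    simp only [Pi.zero_apply, one_mul, neg_mul]
    rw [div_mul_cancel₀ _ (hf ⟨(t : ℕ) + 1, hb⟩)]
    exact add_neg_cancel _
  -- Injectivity of `vecMul · F`
  have hker : ∀ x : Fin (T - 1) → ℝ, Matrix.vecMul x F = 0 → x = 0 := by
    intro x hx
    funext k
    have key : ∀ n (hn : n < T - 1), x ⟨n, hn⟩ = 0 := by
      intro n
      induction n using Nat.strong_induction_on with
      | _ n ih =>
        intro hn
        have hnT : n < T := by omega
        have hval : Matrix.vecMul x F ⟨n, hnT⟩ = 0 := by rw [hx]; rfl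
        rw [Matrix.vecMul, dotProduct] at hval
        match n, hn, hnT, hval with
        | 0, hn, hnT, hval =>
          have hs : ∑ c, x c * F c ⟨0, hnT⟩ = x ⟨0, hn⟩ * F ⟨0, hn⟩ ⟨0, hnT⟩ := by
            refine Finset.sum_eq_single _ ?_ (by simp)
            intro c _ hc
            have h1 : ¬(((⟨0, hnT⟩ : Fin T) : ℕ) = (c : ℕ)) :=
              fun h => hc (Fin.ext h.symm)
            have h2 : ¬(((⟨0, hnT⟩ : Fin T) : ℕ) = (c : ℕ) + 1) :=
              fun h => Nat.succ_ne_zero _ h.symm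
            rw [hF, if_neg h1, if_neg h2, mul_zero]
          rw [hs, hF,
            if_pos (show ((⟨0, hnT⟩ : Fin T) : ℕ) = ((⟨0, hn⟩ : Fin (T - 1)) : ℕ) from rfl),
            mul_one] at hval
          exact hval
        | (m + 1), hn, hnT, hval =>
          have hm : m < T - 1 := by omega
          have hs : ∑ c, x c * F c ⟨m + 1, hnT⟩ =
              x ⟨m + 1, hn⟩ * F ⟨m + 1, hn⟩ ⟨m + 1, hnT⟩ +
              x ⟨m, hm⟩ * F ⟨m, hm⟩ ⟨m + 1, hnT⟩ := by
            refine sum_eq_add_of_two _ _ _ (by simp) ?_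
            intro c hc1 hc2
            have h1 : (c : ℕ) ≠ m + 1 := fun h => hc1 (Fin.ext h)
            have h2 : (c : ℕ) ≠ m := fun h => hc2 (Fin.ext h)
            rw [hF,
              if_neg (show ¬(((⟨m + 1, hnT⟩ : Fin T) : ℕ) = (c : ℕ)) from
                fun h => h1 h.symm),
              if_neg (show ¬(((⟨m + 1, hnT⟩ : Fin T) : ℕ) = (c : ℕ) + 1) from
                fun h => h2 (Nat.succ_injective h).symm),
              mul_zero]
          have eA : F ⟨m + 1, hn⟩ ⟨m + 1, hnT⟩ = 1 := by
            rw [hF]; exact if_pos rfl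
          rw [hs, ih m (Nat.lt_succ_self m) hm, zero_mul, add_zero, eA, mul_one] at hval
          exact hval
    exact key k k.isLt
  -- quadratic form
  have hquad : ∀ x : Fin (T - 1) → ℝ,
      dotProduct x ((F * Matrix.diagonal σ2 * F.transpose).mulVec x) =
      ∑ s, σ2 s * (Matrix.vecMul x F s) ^ 2 := by
    intro x
    rw [← Matrix.mulVec_mulVec, ← Matrix.mulVec_mulVec, dotProduct_mulVec,
      Matrix.mulVec_transpose, dotProduct]
    refine Finset.sum_congr rfl fun s _ => ?_
    rw [Matrix.mulVec_diagonal]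
    ring
  have hPD : (F * Matrix.diagonal σ2 * F.transpose).PosDef := by
    rw [Matrix.posDef_iff_dotProduct_mulVec]
    constructor
    · have h := Matrix.isHermitian_mul_mul_conjTranspose F
        (Matrix.isHermitian_diagonal σ2)
      rwa [Matrix.conjTranspose_eq_transpose_of_trivial] at h
    · intro x hx
      have hstar : star x = x := by funext i; simp
      rw [hstar, hquad x]
      have hy : Matrix.vecMul x F ≠ 0 := fun h => hx (hker x h)
      obtain ⟨s, hs⟩ : ∃ s, Matrix.vecMul x F s ≠ 0 := by
        by_contra h
        push_neg at h
        exact hy (funext h)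
      refine Finset.sum_pos' (fun i _ => ?_) ⟨s, Finset.mem_univ s, ?_⟩
      · have h0 := (hσ2 i).le
        positivity
      · have h0 := hσ2 s
        positivity
  refine ⟨hFf, hPD, ?_⟩
  intro U hUdet hUtri hfact
  haveI : Invertible U := U.invertibleOfIsUnitDet hUdet
  refine ⟨?_, ?_, ?_⟩
  · rw [← Matrix.mulVec_mulVec, hFf, Matrix.mulVec_zero]
  · have hUT : IsUnit U.transpose.det := by rwa [Matrix.det_transpose]
    rw [Matrix.transpose_mul, Matrix.transpose_nonsing_inv]
    calc U⁻¹ * F * Matrix.diagonal σ2 * (F.transpose * U.transpose⁻¹)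
        = U⁻¹ * (F * Matrix.diagonal σ2 * F.transpose) * U.transpose⁻¹ := by
          simp only [Matrix.mul_assoc]
      _ = U⁻¹ * (U * U.transpose) * U.transpose⁻¹ := by rw [hfact]
      _ = (U⁻¹ * U) * (U.transpose * U.transpose⁻¹) := by simp only [Matrix.mul_assoc]
      _ = 1 := by
          rw [Matrix.nonsing_inv_mul _ hUdet, Matrix.mul_nonsing_inv _ hUT, one_mul]
  · intro t s hst
    have hUtri' : U.BlockTriangular (id : Fin (T - 1) → Fin (T - 1)) := by
      intro i j hij
      exact hUtri i j hij
    have hInv : U⁻¹.BlockTriangular (id : Fin (T - 1) → Fin (T - 1)) :=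
      Matrix.blockTriangular_inv_of_blockTriangular hUtri'
    rw [Matrix.mul_apply]
    refine Finset.sum_eq_zero ?_
    intro k _
    by_cases hk : (k : ℕ) < (t : ℕ)
    · rw [hInv (show (id k : Fin (T - 1)) < id t from hk), zero_mul]
    · have h1 : ¬((s : ℕ) = (k : ℕ)) := by omega
      have h2 : ¬((s : ℕ) = (k : ℕ) + 1) := by omega
      rw [hF, if_neg h1, if_neg h2, mul_zero]
end

section
/- Let m ≥ 2, e_m the m×1 vector of ones, and M = (e_m e_m' − I_m)/(m−1) (group averaging excluding own observation). Then the eigenvalues of M are 1 (with eigenvector e_m) and −1/(m−1) (with multiplicity m−1), and for every real λ with |λ| < 1 there exist real constants c_1, c_2 (depending on λ and m) such that M (I_m − λM)^{−1} = c_1 I_m + c_2 M. -/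
open Matrix

/-- Exclusive group-mean matrix `M = (e e' - I)/(m-1)`: eigenvalue `1` on the vector of
ones, eigenvalue `-1/(m-1)` on the `(m-1)`-dimensional space of vectors summing to zero,
and `M (I - λM)⁻¹ = c₁ I + c₂ M` for every `|λ| < 1`. -/
theorem exclusive_group_mean_spectrum_and_collinearity
    (m : ℕ) (hm : 2 ≤ m)
    (M : Matrix (Fin m) (Fin m) ℝ)
    (hM : ∀ i j, M i j = if i = j then 0 else 1 / ((m : ℝ) - 1)) :
    (M.mulVec (fun _ => (1 : ℝ)) = fun _ => (1 : ℝ)) ∧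
    (∀ v : Fin m → ℝ, ∑ i, v i = 0 → M.mulVec v = (-(1 / ((m : ℝ) - 1))) • v) ∧
    (∀ lam : ℝ, |lam| < 1 →
      IsUnit (1 - lam • M) ∧
      ∃ c₁ c₂ : ℝ, M * (1 - lam • M)⁻¹ = c₁ • (1 : Matrix (Fin m) (Fin m) ℝ) + c₂ • M) := by
  have hm1 : (1:ℝ) ≤ (m:ℝ) - 1 := by
    have : (2:ℝ) ≤ (m:ℝ) := by exact_mod_cast hm
    linarith
  set k : ℝ := (m:ℝ) - 1 with hkdef
  have hk0 : k ≠ 0 := by linarith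
  set c : ℝ := 1 / k with hcdef
  have hsum : ∀ i : Fin m, ∑ j, (if i = j then 0 else c) = k * c := by
    intro i
    have h : ∀ j : Fin m, (if i = j then 0 else c) = c - (if i = j then c else 0) := by
      intro j; by_cases h : i = j <;> simp [h]
    simp only [h, Finset.sum_sub_distrib, Finset.sum_const, Finset.card_univ,
      Fintype.card_fin, Finset.sum_ite_eq, Finset.mem_univ, if_true, smul_eq_mul]
    rw [hkdef]; ring
  have part1 : M.mulVec (fun _ => (1:ℝ)) = fun _ => (1:ℝ) := by
    funext i
    simp only [mulVec, dotProduct, hM, mul_one]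
    rw [hsum i, hcdef]
    field_simp
  have part2 : ∀ v : Fin m → ℝ, ∑ i, v i = 0 → M.mulVec v = (-(1 / k)) • v := by
    intro v hv
    funext i
    simp only [mulVec, dotProduct, hM]
    have h : ∀ j : Fin m, (if i = j then 0 else c) * v j
        = c * v j - (if j = i then c * v j else 0) := by
      intro j; by_cases h : i = j <;> simp [h, eq_comm]
    rw [Finset.sum_congr rfl (fun j _ => h j)]
    rw [Finset.sum_sub_distrib, ← Finset.mul_sum, hv]
    simp only [mul_zero, zero_sub, Finset.sum_ite_eq', Finset.mem_univ, if_true,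
      Pi.smul_apply, smul_eq_mul, hcdef]
    ring
  have hM2 : M * M = k⁻¹ • (1 : Matrix (Fin m) (Fin m) ℝ) + ((k - 1)/k) • M := by
    ext i j
    simp only [Matrix.mul_apply, hM, Matrix.add_apply, Matrix.smul_apply, Matrix.one_apply,
      smul_eq_mul]
    have expand : ∀ x : Fin m, (if i = x then 0 else c) * (if x = j then 0 else c)
        = c*c - (if i = x then c*c else 0) - (if x = j then c*c else 0)
          + (if i = x ∧ x = j then c*c else 0) := by
      intro x
      by_cases h1 : i = x <;> by_cases h2 : x = j <;> simp [h1, h2]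
    rw [Finset.sum_congr rfl (fun x _ => expand x)]
    simp only [Finset.sum_add_distrib, Finset.sum_sub_distrib, Finset.sum_const,
      Finset.card_univ, Fintype.card_fin, Finset.sum_ite_eq, Finset.sum_ite_eq',
      Finset.mem_univ, if_true, smul_eq_mul]
    by_cases h : i = j
    · subst h
      have h2 : ∀ x : Fin m, (if i = x ∧ x = i then c*c else 0) = (if i = x then c*c else 0) := by
        intro x
        by_cases hx : i = x
        · subst hx; simp
        · simp [hx]
      rw [Finset.sum_congr rfl (fun x _ => h2 x)]
      simp only [Finset.sum_ite_eq, Finset.mem_univ, if_true, hcdef]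
      rw [nsmul_eq_mul]
      field_simp
      rw [hkdef]; ring
    · have h2 : ∀ x : Fin m, (if i = x ∧ x = j then c*c else 0) = 0 := by
        intro x
        by_cases hx : i = x
        · subst hx; simp [h]
        · simp [hx]
      rw [Finset.sum_congr rfl (fun x _ => h2 x)]
      simp only [Finset.sum_const_zero, if_neg h, hcdef]
      rw [nsmul_eq_mul]
      field_simp
      rw [hkdef]; ring
  refine ⟨part1, part2, ?_⟩
  intro lam hlam
  obtain ⟨hl1, hl2⟩ := abs_lt.mp hlam
  have h1lam : (1:ℝ) - lam ≠ 0 := by linarith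
  have hklam : k + lam ≠ 0 := by linarith
  set α : ℝ := (k*(1-lam)+lam) / ((1-lam)*(k+lam)) with hα
  set β : ℝ := k*lam / ((1-lam)*(k+lam)) with hβ
  set N : Matrix (Fin m) (Fin m) ℝ := α • 1 + β • M with hN
  have key : (1 - lam • M) * N = 1 := by
    have expand : (1 - lam • M) * N
        = (α - lam*β*k⁻¹) • (1 : Matrix (Fin m) (Fin m) ℝ)
          + (β - lam*α - lam*β*((k-1)/k)) • M := by
      rw [hN, sub_mul, one_mul, smul_mul_assoc, mul_add, mul_smul_comm, mul_smul_comm,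
        mul_one, hM2]
      module
    rw [expand]
    have e1 : α - lam*β*k⁻¹ = 1 := by
      rw [hα, hβ]; field_simp; ring
    have e2 : β - lam*α - lam*β*((k-1)/k) = 0 := by
      rw [hα, hβ]; field_simp; ring
    rw [e1, e2]; simp
  have hinv : (1 - lam • M)⁻¹ = N := Matrix.inv_eq_right_inv key
  refine ⟨(Matrix.isUnit_iff_isUnit_det _).mpr (Matrix.isUnit_det_of_right_inverse key), k⁻¹ * β, α + β*((k-1)/k), ?_⟩
  rw [hinv, hN, mul_add, mul_smul_comm, mul_smul_comm, mul_one, hM2]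
  module
end

section
/- Let M = diag(M_{m_1}, …, M_{m_R}) be block-diagonal with blocks M_{m_g} = (e_{m_g} e_{m_g}' − I_{m_g})/(m_g − 1), where not all group sizes m_g are equal (and each m_g ≥ 2). Then there exists λ with |λ| < 1 such that M (I − λM)^{−1} is NOT in the linear span of {I, M}. -/
open Matrix

/-!
If `M (I - λM)⁻¹ = c₁ I + c₂ M`, multiplying by `I - λM` gives
`M = c₁ I + (c₂ - λc₁) M - λc₂ M²`. The exclusive group mean matrix has zero diagonal, while
the diagonal entries of `M²` are `1 / (m_g - 1)` and so differ between groups of different sizes.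
Comparing two such diagonal entries forces `c₂ = 0` (for `λ ≠ 0`), then `c₁ = 0`, hence `M = 0`,
which is absurd. For `|λ| < 1` the matrix `I - λM` is strictly diagonally dominant, since `M` has
zero diagonal and absolute row sums `1`.
-/
theorem Finset.sum_sigma_ite_fst_eq_and_ne {ι : Type*} {β : ι → Type*} [Fintype ι] [DecidableEq ι]
    [∀ i, Fintype (β i)] [∀ i, DecidableEq (β i)] {R : Type*} [Ring R] (x : Σ i, β i) (c : R) :
    ∑ k : Σ i, β i, (if x.1 = k.1 ∧ x ≠ k then c else 0) =
      ((Fintype.card (β x.1) : R) - 1) * c := by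
  obtain ⟨i, b⟩ := x
  rw [← Finset.univ_sigma_univ, Finset.sum_sigma, Finset.sum_eq_single i]
  · have : Nonempty (β i) := ⟨b⟩
    simp [Finset.sum_ite, Finset.filter_ne, Finset.card_erase_of_mem,
      Nat.cast_pred Fintype.card_pos]
  · intro j _ hj
    simp [Ne.symm hj]
  · simp

theorem Matrix.isUnit_one_sub_smul_of_zero_diag {n K : Type*} [Fintype n] [DecidableEq n]
    [NormedField K] {M : Matrix n n K} (hdiag : ∀ x, M x x = 0)
    (hrow : ∀ x, ∑ y, ‖M x y‖ ≤ 1) {lam : K} (hlam : ‖lam‖ < 1) :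
    IsUnit (1 - lam • M) := by
  rw [isUnit_iff_isUnit_det, isUnit_iff_ne_zero]
  refine det_ne_zero_of_sum_row_lt_diag fun x => ?_
  calc ∑ y ∈ Finset.univ.erase x, ‖(1 - lam • M) x y‖
      = ∑ y ∈ Finset.univ.erase x, ‖lam‖ * ‖M x y‖ := by
        refine Finset.sum_congr rfl fun y hy => ?_
        simp [one_apply_ne (Finset.ne_of_mem_erase hy).symm]
    _ ≤ ‖lam‖ * ∑ y, ‖M x y‖ := by
        rw [← Finset.mul_sum]
        gcongr
        exact Finset.subset_univ _
    _ ≤ ‖lam‖ * 1 := by gcongr; exact hrow x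
    _ < ‖(1 - lam • M) x x‖ := by simpa [hdiag x] using hlam

theorem Matrix.mul_inv_one_sub_smul_ne_of_zero_diag {n K : Type*} [Fintype n] [DecidableEq n]
    [Field K] {M : Matrix n n K} (hdiag : ∀ x, M x x = 0) {x y : n}
    (hxy : (M * M) x x ≠ (M * M) y y) {lam : K} (hlam : lam ≠ 0)
    (hunit : IsUnit (1 - lam • M)) (c₁ c₂ : K) :
    M * (1 - lam • M)⁻¹ ≠ c₁ • 1 + c₂ • M := by
  intro h
  have hM : M = c₁ • 1 + (c₂ - lam * c₁) • M - (lam * c₂) • (M * M) :=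
    calc M = M * (1 - lam • M)⁻¹ * (1 - lam • M) :=
          (nonsing_inv_mul_cancel_right _ _ ((isUnit_iff_isUnit_det _).mp hunit)).symm
      _ = _ := by
          rw [h]
          simp only [add_mul, mul_sub, smul_mul_smul, one_mul, mul_one, mul_smul]
          module
  have hdiag_sq : ∀ z, c₁ = lam * c₂ * (M * M) z z := fun z => by
    have := congrFun (congrFun hM z) z
    simp only [sub_apply, add_apply, smul_apply, one_apply_eq, hdiag z, smul_eq_mul] at this
    linear_combination -this
  have hc₂ : c₂ = 0 := by
    have : lam * c₂ * ((M * M) x x - (M * M) y y) = 0 := by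
      linear_combination hdiag_sq y - hdiag_sq x
    simpa [hlam, sub_eq_zero, hxy] using this
  have hc₁ : c₁ = 0 := by simpa [hc₂] using hdiag_sq x
  rw [hc₁, hc₂] at hM
  simp only [zero_smul, zero_add, mul_zero, sub_zero] at hM
  simp [hM] at hxy

section ExclusiveGroupMean

variable {R : ℕ} {m : Fin R → ℕ}

/-- The exclusive group mean matrix: block diagonal with blocks `(e eᵀ - I) / (m_g - 1)`. -/
def IsExclusiveGroupMean (M : Matrix ((g : Fin R) × Fin (m g)) ((g : Fin R) × Fin (m g)) ℝ) :
    Prop :=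
  ∀ x y, M x y = if x.1 = y.1 ∧ x ≠ y then 1 / ((m x.1 : ℝ) - 1) else 0

variable {M : Matrix ((g : Fin R) × Fin (m g)) ((g : Fin R) × Fin (m g)) ℝ}

theorem IsExclusiveGroupMean.apply_self (hM : IsExclusiveGroupMean M)
    (x : (g : Fin R) × Fin (m g)) : M x x = 0 := by
  simp [hM x x]

theorem IsExclusiveGroupMean.mul_self_apply_self
    (hM : IsExclusiveGroupMean M) (x : (g : Fin R) × Fin (m g)) :
    (M * M) x x = 1 / ((m x.1 : ℝ) - 1) := by
  have hterm : ∀ k, M x k * M k x =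
      if x.1 = k.1 ∧ x ≠ k then (1 / ((m x.1 : ℝ) - 1)) ^ 2 else 0 := fun k => by
    by_cases h : x.1 = k.1 ∧ x ≠ k
    · rw [hM, hM, if_pos h, if_pos ⟨h.1.symm, h.2.symm⟩, if_pos h, h.1, sq]
    · rw [hM, if_neg h, if_neg h, zero_mul]
  rw [mul_apply, Finset.sum_congr rfl fun k _ => hterm k,
    Finset.sum_sigma_ite_fst_eq_and_ne x, Fintype.card_fin]
  rcases eq_or_ne ((m x.1 : ℝ) - 1) 0 with h | h
  · simp [h]
  · field_simp

theorem IsExclusiveGroupMean.sum_norm_row_eq_one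
    (hM : IsExclusiveGroupMean M) (x : (g : Fin R) × Fin (m g))
    (hm : 2 ≤ m x.1) : ∑ y, ‖M x y‖ = 1 := by
  have hpos : (0 : ℝ) < (m x.1 : ℝ) - 1 := by
    have : (2 : ℝ) ≤ m x.1 := by exact_mod_cast hm
    linarith
  have hterm : ∀ y, ‖M x y‖ = if x.1 = y.1 ∧ x ≠ y then 1 / ((m x.1 : ℝ) - 1) else 0 :=
    fun y => by
      rw [hM]
      split_ifs <;> simp [hpos.le]
  rw [Finset.sum_congr rfl fun y _ => hterm y, Finset.sum_sigma_ite_fst_eq_and_ne x,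
    Fintype.card_fin]
  field_simp

end ExclusiveGroupMean

/-- With block-diagonal exclusive group means and unequal group sizes, there is some
`|λ| < 1` for which `M (I - λM)⁻¹` is not a linear combination of `I` and `M`, so linear
instruments are not collinear and the peer effect is identifiable. -/
theorem exclusive_group_mean_varying_sizes_identification
    (R : ℕ) (m : Fin R → ℕ) (hm : ∀ g, 2 ≤ m g)
    (hne : ∃ g₁ g₂, m g₁ ≠ m g₂)
    (M : Matrix ((g : Fin R) × Fin (m g)) ((g : Fin R) × Fin (m g)) ℝ)
    (hM : ∀ x y, M x y =
      if x.1 = y.1 ∧ x ≠ y then 1 / ((m x.1 : ℝ) - 1) else 0) :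
    ∃ lam : ℝ, |lam| < 1 ∧ IsUnit (1 - lam • M) ∧
      ∀ c₁ c₂ : ℝ,
        M * (1 - lam • M)⁻¹ ≠
          c₁ • (1 : Matrix ((g : Fin R) × Fin (m g)) ((g : Fin R) × Fin (m g)) ℝ) + c₂ • M := by
  obtain ⟨g₁, g₂, hg⟩ := hne
  replace hM : IsExclusiveGroupMean M := hM
  have hdiag : ∀ x, M x x = 0 := hM.apply_self
  have hunit : IsUnit (1 - (1 / 2 : ℝ) • M) :=
    isUnit_one_sub_smul_of_zero_diag hdiag
      (fun x => (hM.sum_norm_row_eq_one x (hm x.1)).le) (by norm_num)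
  have hsq : (M * M) ⟨g₁, ⟨0, by grind⟩⟩ ⟨g₁, ⟨0, by grind⟩⟩
      ≠ (M * M) ⟨g₂, ⟨0, by grind⟩⟩ ⟨g₂, ⟨0, by grind⟩⟩ := by
    simpa [hM.mul_self_apply_self] using hg
  exact ⟨1 / 2, by norm_num [abs_of_pos], hunit,
    mul_inv_one_sub_smul_ne_of_zero_diag hdiag hsq (by norm_num) hunit⟩
end

section
/- Let Θ be a nonempty set, and let R_n, R : Ω × Θ → ℝ be (possibly random) functions on a probability space. Suppose (i) θ* : Ω → Θ is identifiably unique for R: for every ε > 0, inf_{θ ∈ Θ : d(θ, θ*(ω)) ≥ ε} R(ω, θ) − R(ω, θ*(ω)) > 0 almost surely; and (ii) sup_{θ ∈ Θ} |R_n(ω, θ) − R(ω, θ)| → 0 almost surely as n → ∞. Then for any sequence of measurable minimizers θ̂_n with R_n(ω, θ̂_n(ω)) = inf_{θ ∈ Θ} R_n(ω, θ) eventually, we have θ̂_n → θ* almost surely. -/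
/-!
Fix an outcome `ω` in the almost sure event where all hypotheses hold (identifiable uniqueness
for every `ε` at once, since `ε = 1/(k+1)` suffices). Uniform convergence and minimality of
`θ̂ₙ` give `R(θ̂ₙ) ≤ R(θ*) + 2 supθ |Rₙ - R| → R(θ*)`, and identifiable uniqueness turns
`R(θ̂ₙ) - R(θ*) → 0` into `d(θ̂ₙ, θ*) → 0`.
-/

open MeasureTheory Filter Topology

theorem TendstoUniformly.eventually_lt_add_of_minimizes {Θ ι : Type*} {l : Filter ι}
    {F : ι → Θ → ℝ} {f : Θ → ℝ} {x : ι → Θ} (hF : TendstoUniformly F f l)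
    (hmin : ∀ᶠ i in l, ∀ θ, F i (x i) ≤ F i θ) (θ : Θ) {δ : ℝ} (hδ : 0 < δ) :
    ∀ᶠ i in l, f (x i) < f θ + δ := by
  filter_upwards [Metric.tendstoUniformly_iff.1 hF (δ / 2) (half_pos hδ), hmin]
    with i hclose hi
  have hx := hclose (x i)
  have hθ := hclose θ
  rw [Real.dist_eq, abs_lt] at hx hθ
  linarith [hi θ]

section PseudoMetric

variable {Θ : Type*} [PseudoMetricSpace Θ]

/-- For non-compact `Θ` or discontinuous `R` this is stronger than `θ₀` being a strict minimizer. -/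
def IsIdentifiablyUniqueMin (R : Θ → ℝ) (θ₀ : Θ) : Prop :=
  ∀ ε : ℝ, 0 < ε → ∃ δ : ℝ, 0 < δ ∧ ∀ θ : Θ, ε ≤ dist θ θ₀ → δ ≤ R θ - R θ₀

theorem isIdentifiablyUniqueMin_iff_forall_nat {R : Θ → ℝ} {θ₀ : Θ} :
    IsIdentifiablyUniqueMin R θ₀ ↔ ∀ k : ℕ, ∃ δ : ℝ, 0 < δ ∧
      ∀ θ : Θ, 1 / (k + 1 : ℝ) ≤ dist θ θ₀ → δ ≤ R θ - R θ₀ := by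
  refine ⟨fun h k => h _ (by positivity), fun h ε hε => ?_⟩
  obtain ⟨k, hk⟩ := exists_nat_one_div_lt hε
  obtain ⟨δ, hδ, hsep⟩ := h k
  exact ⟨δ, hδ, fun θ hθ => hsep θ (hk.le.trans hθ)⟩

theorem IsIdentifiablyUniqueMin.tendsto {ι : Type*} {l : Filter ι} {R : Θ → ℝ} {θ₀ : Θ}
    {x : ι → Θ} (hR : IsIdentifiablyUniqueMin R θ₀)
    (hx : ∀ δ : ℝ, 0 < δ → ∀ᶠ i in l, R (x i) < R θ₀ + δ) : Tendsto x l (𝓝 θ₀) := by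
  refine Metric.tendsto_nhds.2 fun ε hε => ?_
  obtain ⟨δ, hδ, hsep⟩ := hR ε hε
  filter_upwards [hx δ hδ] with i hi
  by_contra! hfar
  linarith [hsep _ hfar]

theorem IsIdentifiablyUniqueMin.tendsto_of_tendstoUniformly {ι : Type*} {l : Filter ι}
    {F : ι → Θ → ℝ} {f : Θ → ℝ} {θ₀ : Θ} {x : ι → Θ} (hf : IsIdentifiablyUniqueMin f θ₀)
    (hF : TendstoUniformly F f l) (hmin : ∀ᶠ i in l, ∀ θ, F i (x i) ≤ F i θ) :
    Tendsto x l (𝓝 θ₀) :=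
  hf.tendsto fun _ hδ => hF.eventually_lt_add_of_minimizes hmin θ₀ hδ

end PseudoMetric

theorem ae_isIdentifiablyUniqueMin {Ω Θ : Type*} {mΩ : MeasurableSpace Ω} {μ : Measure Ω}
    [PseudoMetricSpace Θ] {R : Ω → Θ → ℝ} {θ₀ : Ω → Θ}
    (h : ∀ ε : ℝ, 0 < ε → ∀ᵐ ω ∂μ, ∃ δ : ℝ, 0 < δ ∧
      ∀ θ : Θ, ε ≤ dist θ (θ₀ ω) → δ ≤ R ω θ - R ω (θ₀ ω)) :
    ∀ᵐ ω ∂μ, IsIdentifiablyUniqueMin (R ω) (θ₀ ω) := by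
  simp_rw [isIdentifiablyUniqueMin_iff_forall_nat]
  exact ae_all_iff.2 fun k => h _ (by positivity)

theorem consistency_random_limit_objective_general
    {Ω : Type*} {mΩ : MeasurableSpace Ω} (μ : Measure Ω)
    {Θ : Type*} [MetricSpace Θ]
    (Rn : ℕ → Ω → Θ → ℝ) (R : Ω → Θ → ℝ)
    (θstar : Ω → Θ) (θhat : ℕ → Ω → Θ)
    -- identifiable uniqueness: for every ε > 0, a.s.
    -- `inf_{dist(θ, θ*) ≥ ε} (R(ω,θ) - R(ω,θ*(ω))) > 0`
    (hid : ∀ ε : ℝ, 0 < ε → ∀ᵐ ω ∂μ, ∃ δ : ℝ, 0 < δ ∧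
      ∀ θ : Θ, ε ≤ dist θ (θstar ω) → δ ≤ R ω θ - R ω (θstar ω))
    -- a.s. uniform convergence of the objective functions
    (hunif : ∀ᵐ ω ∂μ, ∀ ε : ℝ, 0 < ε → ∃ N : ℕ, ∀ n ≥ N, ∀ θ : Θ,
      |Rn n ω θ - R ω θ| < ε)
    -- `θhat n` eventually minimizes `Rn n`
    (hmin : ∀ᵐ ω ∂μ, ∃ N : ℕ, ∀ n ≥ N, ∀ θ : Θ, Rn n ω (θhat n ω) ≤ Rn n ω θ) :
    ∀ᵐ ω ∂μ, Tendsto (fun n => θhat n ω) atTop (nhds (θstar ω)) := by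
  have hunif' : ∀ᵐ ω ∂μ, TendstoUniformly (fun n => Rn n ω) (R ω) atTop := by
    filter_upwards [hunif] with ω hω
    refine Metric.tendstoUniformly_iff.2 fun ε hε => ?_
    obtain ⟨N, hN⟩ := hω ε hε
    filter_upwards [eventually_ge_atTop N] with n hn θ
    rw [dist_comm, Real.dist_eq]
    exact hN n hn θ
  filter_upwards [ae_isIdentifiablyUniqueMin hid, hunif', hmin] with ω hidω hunifω hminω
  exact hidω.tendsto_of_tendstoUniformly hunifω (eventually_atTop.2 hminω)

/-- Consistency of M-estimators with a stochastic limiting objective function and a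
stochastic, identifiably unique minimizer (Proposition C.1 of Kuersteiner–Prucha). -/
theorem consistency_random_limit_objective
    {Ω : Type*} {mΩ : MeasurableSpace Ω} (μ : Measure Ω) [IsProbabilityMeasure μ]
    {Θ : Type*} [MetricSpace Θ] [Nonempty Θ] [MeasurableSpace Θ]
    (Rn : ℕ → Ω → Θ → ℝ) (R : Ω → Θ → ℝ)
    (θstar : Ω → Θ) (θhat : ℕ → Ω → Θ)
    (hθhat_meas : ∀ n, Measurable (θhat n))
    -- identifiable uniqueness: for every ε > 0, a.s.
    -- `inf_{dist(θ, θ*) ≥ ε} (R(ω,θ) - R(ω,θ*(ω))) > 0`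
    (hid : ∀ ε : ℝ, 0 < ε → ∀ᵐ ω ∂μ, ∃ δ : ℝ, 0 < δ ∧
      ∀ θ : Θ, ε ≤ dist θ (θstar ω) → δ ≤ R ω θ - R ω (θstar ω))
    -- a.s. uniform convergence of the objective functions
    (hunif : ∀ᵐ ω ∂μ, ∀ ε : ℝ, 0 < ε → ∃ N : ℕ, ∀ n ≥ N, ∀ θ : Θ,
      |Rn n ω θ - R ω θ| < ε)
    -- `θhat n` eventually minimizes `Rn n`
    (hmin : ∀ᵐ ω ∂μ, ∃ N : ℕ, ∀ n ≥ N, ∀ θ : Θ, Rn n ω (θhat n ω) ≤ Rn n ω θ) :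
    ∀ᵐ ω ∂μ, Tendsto (fun n => θhat n ω) atTop (nhds (θstar ω)) :=
  consistency_random_limit_objective_general (mΩ := mΩ) μ Rn R θstar θhat hid hunif hmin
end
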